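/- For every simple-clique 3-tree G on n ≥ 4 vertices, ε_Δ(G) ≥ 3: for every multiset D of at most 2 edges of G, the multiset sum of the edge set of G and D is not triangle decomposable. -/

import Mathlib

/-- A triangle on three distinct vertices, as a multiset of edges. -/
def IsTriangle {V : Type*} (t : Multiset (Sym2 V)) : Prop :=
  ∃ a b c : V, a ≠ b ∧ b ≠ c ∧ a ≠ c ∧ t = {s(a, b), s(b, c), s(a, c)}

/-- A multigraph (multiset of edges) is triangle decomposable if it is a sum of triangles. -/
def TriDecomp {V : Type*} (E : Multiset (Sym2 V)) : Prop :=
  ∃ T : Multiset (Multiset (Sym2 V)), (∀ t ∈ T, IsTriangle t) ∧ T.sum = E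

/-- The edge multiset of a simple graph on a finite vertex type. -/
noncomputable def edgeMS {V : Type*} [Fintype V] (G : SimpleGraph V) : Multiset (Sym2 V) :=
  G.edgeSet.toFinite.toFinset.val

/-- `ε_Δ(G)`: the least number of duplicated edges of `G` (a multiset of edges of `G`,
repetitions allowed) whose addition makes the edge multiset triangle decomposable. -/
noncomputable def epsDelta {V : Type*} [Fintype V] (G : SimpleGraph V) : ℕ :=
  sInf {k | ∃ D : Multiset (Sym2 V), D.card = k ∧ (∀ e ∈ D, e ∈ G.edgeSet) ∧
    TriDecomp (edgeMS G + D)}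

/-- The edge set of the simple-clique 3-tree construction on `Fin n`: start with the
complete graph `K_4` on `0,1,2,3`, and each vertex `k ≥ 4` is attached to the three
vertices `a k, b k, c k` of an existing triangle. -/
def sc3Edges (n : ℕ) (a b c : Fin n → Fin n) : Set (Sym2 (Fin n)) :=
  {e | (∃ i j : Fin n, (i : ℕ) < 4 ∧ (j : ℕ) < 4 ∧ i ≠ j ∧ e = s(i, j)) ∨
       ∃ k : Fin n, 4 ≤ (k : ℕ) ∧ (e = s(k, a k) ∨ e = s(k, b k) ∨ e = s(k, c k))}

/-- `G` is a simple-clique 3-tree: it is built from `K_4` by repeatedly adding a new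
vertex adjacent to exactly the three vertices of a triangle of the current graph, each
triangle being used as an attachment triangle at most once. -/
def IsSC3 {n : ℕ} (G : SimpleGraph (Fin n)) : Prop :=
  ∃ (_hn : 4 ≤ n) (a b c : Fin n → Fin n),
    (∀ k : Fin n, 4 ≤ (k : ℕ) →
      (a k : ℕ) < k ∧ (b k : ℕ) < k ∧ (c k : ℕ) < k ∧
      a k ≠ b k ∧ b k ≠ c k ∧ a k ≠ c k) ∧
    (∀ k : Fin n, 4 ≤ (k : ℕ) →
      s(a k, b k) ∈ sc3Edges n a b c ∧ s(b k, c k) ∈ sc3Edges n a b c ∧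
      s(a k, c k) ∈ sc3Edges n a b c) ∧
    (∀ k l : Fin n, 4 ≤ (k : ℕ) → 4 ≤ (l : ℕ) → k ≠ l →
      ({a k, b k, c k} : Finset (Fin n)) ≠ {a l, b l, c l}) ∧
    G = SimpleGraph.fromEdgeSet (sc3Edges n a b c)

/-!
A triangle decomposition has a multiple of three edges and meets every vertex in an even
number of edges. Counting each edge at its larger endpoint, a simple-clique 3-tree on `n`
vertices has `0 + 1 + 2 + 3 + 3 (n - 4)` edges, a multiple of three, and its last vertex has
degree three. Hence fewer than three added edges must be no edges at all, and then the last
vertex has odd degree. The minimum defining `ε_Δ` exists since every edge lies in a triangle.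
-/

open Finset

section TriangleDecomposition

variable {V : Type*}

lemma IsTriangle.card_eq_three {t : Multiset (Sym2 V)} (h : IsTriangle t) :
    Multiset.card t = 3 := by
  obtain ⟨a, b, c, -, -, -, rfl⟩ := h
  rfl

lemma IsTriangle.even_countP_mem [DecidableEq V] {t : Multiset (Sym2 V)} (h : IsTriangle t)
    (v : V) : Even (t.countP (v ∈ ·)) := by
  obtain ⟨a, b, c, hab, hbc, hac, rfl⟩ := h
  by_cases ha : v = a <;> by_cases hb : v = b <;> by_cases hc : v = c <;>
    simp_all [Multiset.insert_eq_cons, ← Multiset.cons_zero, Sym2.mem_iff]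

lemma TriDecomp.three_dvd_card {E : Multiset (Sym2 V)} (h : TriDecomp E) :
    3 ∣ Multiset.card E := by
  obtain ⟨T, hT, rfl⟩ := h
  refine Multiset.sum_induction (fun E => 3 ∣ Multiset.card E) T ?_ (by simp) ?_
  · intro E F hE hF
    rw [Multiset.card_add]
    exact dvd_add hE hF
  · intro t ht
    rw [(hT t ht).card_eq_three]

lemma TriDecomp.even_countP_mem [DecidableEq V] {E : Multiset (Sym2 V)} (h : TriDecomp E)
    (v : V) : Even (E.countP (v ∈ ·)) := by
  obtain ⟨T, hT, rfl⟩ := h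
  refine Multiset.sum_induction (fun E => Even (E.countP (v ∈ ·))) T ?_ (by simp) ?_
  · intro E F hE hF
    rw [Multiset.countP_add]
    exact hE.add hF
  · exact fun t ht => (hT t ht).even_countP_mem v

lemma not_triDecomp_add_of_card_lt_three [DecidableEq V] {E D : Multiset (Sym2 V)}
    (hE : 3 ∣ Multiset.card E) {v : V} (hv : Odd (E.countP (v ∈ ·)))
    (hD : Multiset.card D < 3) : ¬ TriDecomp (E + D) := by
  intro h
  have hD0 : D = 0 := by
    have := h.three_dvd_card
    rw [Multiset.card_add, ← Nat.dvd_add_iff_right hE] at this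
    exact Multiset.card_eq_zero.mp (Nat.eq_zero_of_dvd_of_lt this hD)
  subst hD0
  rw [add_zero] at h
  exact Nat.not_even_iff_odd.mpr hv (h.even_countP_mem v)

lemma triDecomp_add_bind_erase [DecidableEq V] {E : Multiset (Sym2 V)}
    (t : Sym2 V → Multiset (Sym2 V)) (ht : ∀ e ∈ E, IsTriangle (t e) ∧ e ∈ t e) :
    TriDecomp (E + E.bind fun e => (t e).erase e) := by
  refine ⟨E.map t, by simpa using fun e he => (ht e he).1, ?_⟩
  calc (E.map t).sum = E.bind fun e => e ::ₘ (t e).erase e :=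
        Multiset.bind_congr fun e he => (Multiset.cons_erase (ht e he).2).symm
    _ = E + E.bind fun e => (t e).erase e := by rw [Multiset.bind_cons, Multiset.map_id']

end TriangleDecomposition

namespace SimpleGraph

variable {V : Type*} [Fintype V] (G : SimpleGraph V)

lemma mem_edgeMS {e : Sym2 V} : e ∈ edgeMS G ↔ e ∈ G.edgeSet := by
  rw [edgeMS, Finset.mem_val, Set.Finite.mem_toFinset]

lemma edgeMS_eq_edgeFinset_val [DecidableRel G.Adj] :
    edgeMS G = G.edgeFinset.val :=
  congrArg Finset.val (by ext e; simp)

lemma card_edgeMS [DecidableRel G.Adj] :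
    Multiset.card (edgeMS G) = #G.edgeFinset := by
  rw [edgeMS_eq_edgeFinset_val]
  rfl

lemma countP_mem_edgeMS [DecidableEq V] [DecidableRel G.Adj] (v : V) :
    (edgeMS G).countP (v ∈ ·) = G.degree v := by
  rw [edgeMS_eq_edgeFinset_val, Multiset.countP_eq_card_filter, ← card_incidenceFinset_eq_degree,
    incidenceFinset_eq_filter]
  rfl

-- `sInf ∅ = 0`, so the set in `epsDelta` must be shown nonempty: doubling the two other edges of
-- a triangle through each edge turns `G` into the sum of these triangles.
lemma le_epsDelta_of_forall_edge_in_triangle (hG : ∀ e ∈ G.edgeSet, ∃ z, ∀ v ∈ e, G.Adj v z)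
    {k : ℕ} (hk : ∀ D : Multiset (Sym2 V), (∀ e ∈ D, e ∈ G.edgeSet) → Multiset.card D < k →
      ¬ TriDecomp (edgeMS G + D)) :
    k ≤ epsDelta G := by
  classical
  have htri : ∀ e ∈ G.edgeSet, ∃ t, IsTriangle t ∧ e ∈ t ∧ ∀ f ∈ t, f ∈ G.edgeSet := by
    intro e he
    obtain ⟨z, hz⟩ := hG e he
    induction e using Sym2.ind with
    | h x y =>
      have hxz := hz x (Sym2.mem_mk_left x y)
      have hyz := hz y (Sym2.mem_mk_right x y)
      refine ⟨{s(x, y), s(y, z), s(x, z)}, ⟨x, y, z, G.ne_of_adj he, G.ne_of_adj hyz,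
        G.ne_of_adj hxz, rfl⟩, by simp, ?_⟩
      simp only [Multiset.insert_eq_cons, Multiset.mem_cons, Multiset.mem_singleton]
      rintro f (rfl | rfl | rfl) <;> assumption
  choose! t ht using htri
  have hne : {k | ∃ D : Multiset (Sym2 V), D.card = k ∧ (∀ e ∈ D, e ∈ G.edgeSet) ∧
      TriDecomp (edgeMS G + D)}.Nonempty := by
    refine ⟨_, (edgeMS G).bind fun e => (t e).erase e, rfl, ?_, triDecomp_add_bind_erase t ?_⟩
    · intro f hf
      obtain ⟨e, he, hf⟩ := Multiset.mem_bind.mp hf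
      rw [mem_edgeMS] at he
      exact (ht e he).2.2 f (Multiset.mem_of_mem_erase hf)
    · intro e he
      rw [mem_edgeMS] at he
      exact ⟨(ht e he).1, (ht e he).2.1⟩
  refine le_csInf hne ?_
  rintro _ ⟨D, rfl, hD, hdec⟩
  by_contra hlt
  exact hk D hD (not_le.mp hlt) hdec

section LinearOrder

variable [LinearOrder V] [DecidableRel G.Adj]

theorem card_edgeFinset_eq_sum_card_lower :
    #G.edgeFinset = ∑ v, #{u | G.Adj v u ∧ u < v} := by
  rw [card_eq_sum_card_fiberwise (f := Sym2.sup) (t := univ)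
    fun _ _ => mem_coe.mpr (mem_univ _)]
  refine sum_congr rfl fun v _ => ?_
  refine card_bij' (fun e _ => e.inf) (fun u _ => s(v, u)) ?_ ?_ ?_ ?_
  · intro e he
    obtain ⟨hadj, rfl⟩ := mem_filter.mp he
    rw [mem_edgeFinset] at hadj
    clear he
    induction e using Sym2.ind with
    | h x y =>
      rcases lt_or_gt_of_ne (G.ne_of_adj hadj) with h | h
      · simpa [h.le, h] using hadj.symm
      · simpa [h.le, h] using hadj
  · intro u hu
    simp only [mem_filter, mem_univ, true_and] at hu
    simp [hu.1, hu.2.le]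
  · intro e he
    obtain ⟨-, rfl⟩ := mem_filter.mp he
    exact Sym2.inf_eq_inf_and_sup_eq_sup.mp
      ⟨by simp [Sym2.inf_le_sup], by simp [Sym2.inf_le_sup]⟩
  · intro u hu
    simp only [mem_filter, mem_univ, true_and] at hu
    simp [hu.2.le]

theorem degree_eq_card_lower_of_isMax {v : V} (hv : ∀ u, u ≤ v) :
    G.degree v = #{u | G.Adj v u ∧ u < v} := by
  rw [← card_neighborFinset_eq_degree, neighborFinset_eq_filter]
  congr 1
  ext u
  simp only [mem_filter, mem_univ, true_and, iff_self_and]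
  exact fun h => lt_of_le_of_ne (hv u) (G.ne_of_adj h).symm

end LinearOrder

end SimpleGraph

lemma Sym2.mk_eq_mk_iff_of_lt {α : Type*} [LinearOrder α] {k x l y : α} (hx : x < k)
    (hy : y < l) : s(k, x) = s(l, y) ↔ k = l ∧ x = y := by
  rw [Sym2.eq_iff]
  constructor
  · rintro (h | ⟨rfl, rfl⟩)
    · exact h
    · exact absurd (hx.trans hy) (lt_irrefl x)
  · exact Or.inl

lemma three_dvd_sum_attachment_counts {n : ℕ} (hn : 4 ≤ n) :
    3 ∣ ∑ k : Fin n, if (k : ℕ) < 4 then (k : ℕ) else 3 := by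
  rw [Fin.sum_univ_eq_sum_range (fun k => if k < 4 then k else 3)]
  induction n, hn using Nat.le_induction with
  | base => decide
  | succ m hm ih =>
    rw [sum_range_succ, if_neg (by omega)]
    exact dvd_add ih dvd_rfl

def AttachesToEarlier {n : ℕ} (a b c : Fin n → Fin n) : Prop :=
  ∀ k : Fin n, 4 ≤ (k : ℕ) →
    (a k : ℕ) < k ∧ (b k : ℕ) < k ∧ (c k : ℕ) < k ∧ a k ≠ b k ∧ b k ≠ c k ∧ a k ≠ c k

abbrev sc3Graph (n : ℕ) (a b c : Fin n → Fin n) : SimpleGraph (Fin n) :=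
  SimpleGraph.fromEdgeSet (sc3Edges n a b c)

section SimpleClique3Tree

variable {n : ℕ} {a b c : Fin n → Fin n}

lemma mk_mem_sc3Edges_iff_of_lt (h : AttachesToEarlier a b c) {k u : Fin n} (hu : u < k) :
    s(k, u) ∈ sc3Edges n a b c ↔
      (k : ℕ) < 4 ∨ 4 ≤ (k : ℕ) ∧ (u = a k ∨ u = b k ∨ u = c k) := by
  simp only [sc3Edges, Set.mem_ofPred_eq]
  constructor
  · rintro (⟨i, j, hi, hj, -, he⟩ | ⟨l, hl, he⟩)
    · left
      rcases Sym2.eq_iff.mp he with ⟨rfl, -⟩ | ⟨rfl, -⟩ <;> assumption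
    · obtain ⟨hal, hbl, hcl, -⟩ := h l hl
      right
      rcases he with he | he | he
      · obtain ⟨rfl, rfl⟩ := (Sym2.mk_eq_mk_iff_of_lt hu hal).mp he
        exact ⟨hl, Or.inl rfl⟩
      · obtain ⟨rfl, rfl⟩ := (Sym2.mk_eq_mk_iff_of_lt hu hbl).mp he
        exact ⟨hl, Or.inr (Or.inl rfl)⟩
      · obtain ⟨rfl, rfl⟩ := (Sym2.mk_eq_mk_iff_of_lt hu hcl).mp he
        exact ⟨hl, Or.inr (Or.inr rfl)⟩
  · rintro (hk | ⟨hk, hx⟩)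
    · exact Or.inl ⟨k, u, hk, lt_trans hu hk, hu.ne', rfl⟩
    · exact Or.inr ⟨k, hk, by rcases hx with rfl | rfl | rfl <;> simp⟩

lemma lower_neighbors_sc3Graph (h : AttachesToEarlier a b c) (k : Fin n)
    [DecidableRel (sc3Graph n a b c).Adj] :
    ({u | (sc3Graph n a b c).Adj k u ∧ u < k} : Finset (Fin n)) =
      if (k : ℕ) < 4 then Iio k else {a k, b k, c k} := by
  ext u
  simp only [mem_filter, mem_univ, true_and, SimpleGraph.fromEdgeSet_adj]
  split_ifs with hk
  · simp only [mem_Iio]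
    constructor
    · exact fun hu => hu.2
    · exact fun hu => ⟨⟨(mk_mem_sc3Edges_iff_of_lt h hu).mpr (Or.inl hk), hu.ne'⟩, hu⟩
  · obtain ⟨hak, hbk, hck, -⟩ := h k (not_lt.mp hk)
    simp only [mem_insert, mem_singleton]
    constructor
    · rintro ⟨⟨he, -⟩, hu⟩
      exact (((mk_mem_sc3Edges_iff_of_lt h hu).mp he).resolve_left hk).2
    · intro hx
      have hu : u < k := by rcases hx with rfl | rfl | rfl <;> assumption
      exact ⟨⟨(mk_mem_sc3Edges_iff_of_lt h hu).mpr (Or.inr ⟨not_lt.mp hk, hx⟩), hu.ne'⟩, hu⟩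

lemma card_lower_neighbors_sc3Graph (h : AttachesToEarlier a b c) (k : Fin n)
    [DecidableRel (sc3Graph n a b c).Adj] :
    #{u | (sc3Graph n a b c).Adj k u ∧ u < k} = if (k : ℕ) < 4 then (k : ℕ) else 3 := by
  rw [lower_neighbors_sc3Graph h k]
  split_ifs with hk
  · exact Fin.card_Iio k
  · obtain ⟨-, -, -, hab, hbc, hac⟩ := h k (not_lt.mp hk)
    rw [card_insert_of_notMem (by simp [hab, hac]), card_pair hbc]

lemma exists_common_neighbor_sc3Graph (hn : 4 ≤ n) (h : AttachesToEarlier a b c)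
    (htri : ∀ k : Fin n, 4 ≤ (k : ℕ) →
      s(a k, b k) ∈ sc3Edges n a b c ∧ s(b k, c k) ∈ sc3Edges n a b c ∧
      s(a k, c k) ∈ sc3Edges n a b c) :
    ∀ e ∈ (sc3Graph n a b c).edgeSet, ∃ z, ∀ v ∈ e, (sc3Graph n a b c).Adj v z := by
  intro e he
  rw [SimpleGraph.edgeSet_fromEdgeSet] at he
  rcases he.1 with ⟨i, j, hi, hj, hij, rfl⟩ | ⟨k, hk, he⟩
  · obtain ⟨m, hm, hmij⟩ := exists_mem_notMem_of_card_lt_card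
      (s := {(i : ℕ), (j : ℕ)}) (t := range 4) (card_le_two.trans_lt (by simp))
    simp only [mem_range, mem_insert, mem_singleton, not_or] at hm hmij
    refine ⟨⟨m, by omega⟩, ?_⟩
    rintro v hv
    have hv4 : (v : ℕ) < 4 ∧ (v : ℕ) ≠ m := by
      rcases Sym2.mem_iff.mp hv with rfl | rfl <;> omega
    exact (SimpleGraph.fromEdgeSet_adj _).mpr
      ⟨Or.inl ⟨v, ⟨m, by omega⟩, hv4.1, hm, Fin.ne_of_val_ne hv4.2, rfl⟩,
        Fin.ne_of_val_ne hv4.2⟩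
  · obtain ⟨hak, hbk, hck, hab, hbc, hac⟩ := h k hk
    have hattach : ∀ x y : Fin n, x ≠ y → x < k → y < k → s(x, y) ∈ sc3Edges n a b c →
        s(k, y) ∈ sc3Edges n a b c → ∀ v ∈ s(k, x), (sc3Graph n a b c).Adj v y := by
      intro x y hxy hx hy hxy' hky v hv
      rcases Sym2.mem_iff.mp hv with rfl | rfl
      · exact (SimpleGraph.fromEdgeSet_adj _).mpr ⟨hky, hy.ne'⟩
      · exact (SimpleGraph.fromEdgeSet_adj _).mpr ⟨hxy', hxy⟩
    obtain ⟨hab', hbc', hac'⟩ := htri k hk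
    rcases he with rfl | rfl | rfl
    · exact ⟨b k, hattach _ _ hab hak hbk hab' (Or.inr ⟨k, hk, by simp⟩)⟩
    · exact ⟨c k, hattach _ _ hbc hbk hck hbc' (Or.inr ⟨k, hk, by simp⟩)⟩
    · exact ⟨a k, hattach _ _ hac.symm hck hak (Sym2.eq_swap ▸ hac')
        (Or.inr ⟨k, hk, by simp⟩)⟩

lemma degree_last_sc3Graph (hn : 4 ≤ n) (h : AttachesToEarlier a b c)
    [DecidableRel (sc3Graph n a b c).Adj] :
    (sc3Graph n a b c).degree ⟨n - 1, by omega⟩ = 3 := by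
  have hlast : ∀ u : Fin n, u ≤ ⟨n - 1, by omega⟩ :=
    fun u => Fin.le_def.mpr (Nat.le_sub_one_of_lt u.isLt)
  rw [SimpleGraph.degree_eq_card_lower_of_isMax _ hlast, card_lower_neighbors_sc3Graph h]
  split_ifs with h4
  · simp only at h4 ⊢
    omega
  · rfl

end SimpleClique3Tree

/-- For every simple-clique 3-tree `G` on `n ≥ 4` vertices, `ε_Δ(G) ≥ 3`: adding any
multiset of at most two edges of `G` never yields a triangle decomposable multigraph. -/
theorem sc3_epsDelta_ge_three {n : ℕ} (G : SimpleGraph (Fin n)) (hG : IsSC3 G) :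
    3 ≤ epsDelta G ∧
    ∀ D : Multiset (Sym2 (Fin n)), (∀ e ∈ D, e ∈ G.edgeSet) → D.card ≤ 2 →
      ¬ TriDecomp (edgeMS G + D) := by
  classical
  obtain ⟨hn, a, b, c, h, htri, -, rfl⟩ := hG
  have hcard : 3 ∣ Multiset.card (edgeMS (sc3Graph n a b c)) := by
    rw [SimpleGraph.card_edgeMS, SimpleGraph.card_edgeFinset_eq_sum_card_lower]
    simpa only [card_lower_neighbors_sc3Graph h] using three_dvd_sum_attachment_counts hn
  have hodd : Odd ((edgeMS (sc3Graph n a b c)).countP (⟨n - 1, by omega⟩ ∈ ·)) := by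
    rw [SimpleGraph.countP_mem_edgeMS, degree_last_sc3Graph hn h]
    decide
  have hnot := fun D => not_triDecomp_add_of_card_lt_three (D := D) hcard hodd
  exact ⟨SimpleGraph.le_epsDelta_of_forall_edge_in_triangle _
      (exists_common_neighbor_sc3Graph hn h htri) fun D _ => hnot D,
    fun D _ hD => hnot D (by omega)⟩
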